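/- Let n ≥ 4, 1 ≤ d ≤ n−1, and suppose G ∈ Ω_{n,d} contains three vertices {v_0, v_1, v_2} such that the induced digraph G[{v_0,v_1,v_2}] is a directed 3-cycle. Then there exists either a useful neighbour or a useful arc for this 3-cycle. -/

import Mathlib

/-- `A` is the arc set of a `d`-regular digraph on the vertex set `Fin n`:
no loops, and every vertex has out-degree `d` and in-degree `d`. -/
def IsRegularDigraph (n d : ℕ) (A : Finset (Fin n × Fin n)) : Prop :=
  (∀ a ∈ A, a.1 ≠ a.2) ∧
  (∀ v : Fin n, (A.filter fun a => a.1 = v).card = d ∧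
                (A.filter fun a => a.2 = v).card = d)

/-- The set `𝒲^{(b,c)}(U,G)`: vertices `x ∉ U` such that for every `u ∈ U`, the
arc `(x,u)` is present iff `b` and the arc `(u,x)` is present iff `c`. -/
def Wset {n : ℕ} (A : Finset (Fin n × Fin n)) (U : Finset (Fin n))
    (b c : Bool) (x : Fin n) : Prop :=
  x ∉ U ∧ ∀ u ∈ U, (((x, u) ∈ A) ↔ b = true) ∧ (((u, x) ∈ A) ↔ c = true)

/-- A useful neighbour for the `3`-cycle on `U`: a vertex outside `U` lying in none
of the four sets `𝒲^{(i,j)}(U,G)`. -/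
def UsefulNeighbour {n : ℕ} (A : Finset (Fin n × Fin n)) (U : Finset (Fin n))
    (x : Fin n) : Prop :=
  x ∉ U ∧
    ¬(Wset A U false false x ∨ Wset A U false true x ∨
      Wset A U true false x ∨ Wset A U true true x)

/-- A useful arc `(x,y)` for the `3`-cycle on `U`: either
(U1) `(x,y) ∈ A(G)` with `x ∈ 𝒲^{(0,0)} ∪ 𝒲^{(0,1)}` and `y ∈ 𝒲^{(0,0)} ∪ 𝒲^{(1,0)}`, or
(U2) `(x,y) ∉ A(G)` with `x ∈ 𝒲^{(1,0)} ∪ 𝒲^{(1,1)}` and `y ∈ 𝒲^{(0,1)} ∪ 𝒲^{(1,1)}`. -/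
def UsefulArc {n : ℕ} (A : Finset (Fin n × Fin n)) (U : Finset (Fin n))
    (x y : Fin n) : Prop :=
  x ≠ y ∧
    (((x, y) ∈ A ∧ (Wset A U false false x ∨ Wset A U false true x) ∧
        (Wset A U false false y ∨ Wset A U true false y)) ∨
     ((x, y) ∉ A ∧ (Wset A U true false x ∨ Wset A U true true x) ∧
        (Wset A U false true y ∨ Wset A U true true y)))

/-!
Suppose there is neither a useful neighbour nor a useful arc, so every vertex outside
`U = {v₀, v₁, v₂}` lies in some `𝒲^{(b,c)}`.

If `d < 3`, no vertex can send arcs to, or receive arcs from, all of `U`, so every vertex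
outside `U` lies in `𝒲^{(0,0)}`; an out-neighbour of such a vertex again lies outside `U`,
and the arc between them is useful of type (U1).

If `d ≥ 3`, take an in-neighbour `w ≠ v₂` of `v₀`; it lies outside `U`, hence in
`𝒲^{(1,0)} ∪ 𝒲^{(1,1)}`, so it sends arcs to all of `U`. Every out-neighbour `y ≠ v₁` of `v₀`
lies outside `U`, hence in `𝒲^{(0,1)} ∪ 𝒲^{(1,1)}`, and since `(w, y)` is not useful of
type (U2), `w` sends an arc to `y` as well. This gives `w` at least `3 + (d - 2) > d`
out-neighbours.
-/

open Finset

section Neighbourhoods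

variable {α : Type*} [DecidableEq α] (A : Finset (α × α))

def outNbrs (v : α) : Finset α := (A.filter fun a => a.1 = v).image Prod.snd

def inNbrs (v : α) : Finset α := (A.filter fun a => a.2 = v).image Prod.fst

variable {A}

@[simp]
theorem mem_outNbrs {v y : α} : y ∈ outNbrs A v ↔ (v, y) ∈ A := by
  simp [outNbrs]

@[simp]
theorem mem_inNbrs {v y : α} : y ∈ inNbrs A v ↔ (y, v) ∈ A := by
  simp [inNbrs]

theorem card_outNbrs (v : α) : #(outNbrs A v) = #(A.filter fun a => a.1 = v) :=
  card_image_of_injOn fun _ ha _ hb hab =>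
    Prod.ext ((mem_filter.1 ha).2.trans (mem_filter.1 hb).2.symm) hab

theorem card_inNbrs (v : α) : #(inNbrs A v) = #(A.filter fun a => a.2 = v) :=
  card_image_of_injOn fun _ ha _ hb hab =>
    Prod.ext hab ((mem_filter.1 ha).2.trans (mem_filter.1 hb).2.symm)

end Neighbourhoods

variable {n d : ℕ} {A : Finset (Fin n × Fin n)} {U : Finset (Fin n)}

namespace IsRegularDigraph

theorem ne_of_mem (hA : IsRegularDigraph n d A) {x y : Fin n} (h : (x, y) ∈ A) : x ≠ y :=
  hA.1 _ h

theorem card_outNbrs_eq (hA : IsRegularDigraph n d A) (v : Fin n) : #(outNbrs A v) = d :=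
  (card_outNbrs v).trans (hA.2 v).1

theorem card_inNbrs_eq (hA : IsRegularDigraph n d A) (v : Fin n) : #(inNbrs A v) = d :=
  (card_inNbrs v).trans (hA.2 v).2

end IsRegularDigraph

namespace Wset

variable {b c : Bool} {x : Fin n}

theorem subset_outNbrs (h : Wset A U true c x) : U ⊆ outNbrs A x :=
  fun u hu => mem_outNbrs.2 (((h.2 u hu).1).2 rfl)

theorem subset_inNbrs (h : Wset A U b true x) : U ⊆ inNbrs A x :=
  fun u hu => mem_inNbrs.2 (((h.2 u hu).2).2 rfl)

theorem eq_true_of_mem_out {u : Fin n} (h : Wset A U b c x) (hu : u ∈ U) (hxu : (x, u) ∈ A) :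
    b = true :=
  ((h.2 u hu).1).1 hxu

theorem eq_true_of_mem_in {u : Fin n} (h : Wset A U b c x) (hu : u ∈ U) (hux : (u, x) ∈ A) :
    c = true :=
  ((h.2 u hu).2).1 hux

theorem eq_false_of_lt_card (hA : IsRegularDigraph n d A) (hdU : d < #U) (h : Wset A U b c x) :
    b = false ∧ c = false := by
  constructor
  · cases b
    · rfl
    · have := card_le_card h.subset_outNbrs
      rw [hA.card_outNbrs_eq] at this
      omega
  · cases c
    · rfl
    · have := card_le_card h.subset_inNbrs
      rw [hA.card_inNbrs_eq] at this
      omega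

end Wset

theorem exists_wset_of_not_usefulNeighbour {x : Fin n} (hx : x ∉ U)
    (h : ¬UsefulNeighbour A U x) : ∃ b c, Wset A U b c x := by
  simp only [UsefulNeighbour, not_and, not_not] at h
  rcases h hx with h | h | h | h <;> exact ⟨_, _, h⟩

theorem usefulArc_of_mem {b c : Bool} {x y : Fin n} (hne : x ≠ y) (hxy : (x, y) ∈ A)
    (hx : Wset A U false c x) (hy : Wset A U b false y) : UsefulArc A U x y := by
  refine ⟨hne, .inl ⟨hxy, ?_, ?_⟩⟩
  · cases c <;> simp [hx]
  · cases b <;> simp [hy]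

theorem usefulArc_of_not_mem {b c : Bool} {x y : Fin n} (hne : x ≠ y) (hxy : (x, y) ∉ A)
    (hx : Wset A U true c x) (hy : Wset A U b true y) : UsefulArc A U x y := by
  refine ⟨hne, .inr ⟨hxy, ?_, ?_⟩⟩
  · cases c <;> simp [hx]
  · cases b <;> simp [hy]

section NoUsefulArc

variable (hA : IsRegularDigraph n d A) (hW : ∀ x ∉ U, ∃ b c, Wset A U b c x)
  (hArc : ∀ x y, ¬UsefulArc A U x y)
include hA hW hArc

theorem false_of_lt_card (hd : 1 ≤ d) (hdU : d < #U) (hUn : #U < n) : False := by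
  obtain ⟨x, -, hxU⟩ :=
    exists_mem_notMem_of_card_lt_card (s := U) (t := univ) (by simpa using hUn)
  obtain ⟨b, c, hx⟩ := hW x hxU
  obtain ⟨rfl, rfl⟩ := hx.eq_false_of_lt_card hA hdU
  obtain ⟨y, hy⟩ : (outNbrs A x).Nonempty := by
    rw [← card_pos, hA.card_outNbrs_eq]
    exact hd
  have hxy : (x, y) ∈ A := mem_outNbrs.1 hy
  have hyU : y ∉ U := fun hyU => Bool.false_ne_true (hx.eq_true_of_mem_out hyU hxy)
  obtain ⟨b', c', hy⟩ := hW y hyU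
  obtain ⟨rfl, rfl⟩ := hy.eq_false_of_lt_card hA hdU
  exact hArc x y (usefulArc_of_mem (hA.ne_of_mem hxy) hxy hx hy)

theorem card_add_card_outNbrs_sdiff_le {v w : Fin n} (hv : v ∈ U) (hwU : w ∉ U)
    (hwv : (w, v) ∈ A) : #U + #(outNbrs A v \ U) ≤ d + 1 := by
  obtain ⟨b, c, hw⟩ := hW w hwU
  obtain rfl := hw.eq_true_of_mem_out hv hwv
  have hsub : U ∪ (outNbrs A v \ U).erase w ⊆ outNbrs A w := by
    refine union_subset hw.subset_outNbrs fun y hy => ?_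
    obtain ⟨hyw, hyv, hyU⟩ : y ≠ w ∧ (v, y) ∈ A ∧ y ∉ U := by simpa using hy
    obtain ⟨b', c', hy⟩ := hW y hyU
    obtain rfl := hy.eq_true_of_mem_in hv hyv
    by_contra hwy
    exact hArc w y (usefulArc_of_not_mem (Ne.symm hyw) (mt mem_outNbrs.2 hwy) hw hy)
  have hdisj : Disjoint U ((outNbrs A v \ U).erase w) :=
    disjoint_of_subset_right (erase_subset _ _) disjoint_sdiff
  have := card_le_card hsub
  rw [card_union_of_disjoint hdisj, hA.card_outNbrs_eq] at this
  have := pred_card_le_card_erase (s := outNbrs A v \ U) (a := w)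
  omega

end NoUsefulArc

theorem useful_neighbour_or_arc_exists_general (n d : ℕ) (hn : 4 ≤ n)
    (hd1 : 1 ≤ d)
    (A : Finset (Fin n × Fin n)) (hA : IsRegularDigraph n d A)
    (v0 v1 v2 : Fin n) (h01 : v0 ≠ v1) (h02 : v0 ≠ v2) (h12 : v1 ≠ v2)
    (hc4 : (v1, v0) ∉ A) (hc6 : (v0, v2) ∉ A) :
    (∃ x, UsefulNeighbour A {v0, v1, v2} x) ∨
      (∃ x y, UsefulArc A {v0, v1, v2} x y) := by
  by_contra! ⟨hN, hArc⟩
  set U : Finset (Fin n) := {v0, v1, v2}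
  have hW : ∀ x ∉ U, ∃ b c, Wset A U b c x :=
    fun x hx => exists_wset_of_not_usefulNeighbour hx (hN x)
  have hU : #U = 3 := card_eq_three.2 ⟨v0, v1, v2, h01, h02, h12, rfl⟩
  rcases lt_or_ge d 3 with hd | hd
  · exact false_of_lt_card hA hW hArc hd1 (by omega) (by omega)
  have hin := pred_card_le_card_erase (s := inNbrs A v0) (a := v2)
  have hout := pred_card_le_card_erase (s := outNbrs A v0) (a := v1)
  rw [hA.card_inNbrs_eq] at hin
  rw [hA.card_outNbrs_eq] at hout
  obtain ⟨w, hw⟩ : ((inNbrs A v0).erase v2).Nonempty := card_pos.1 (by omega)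
  obtain ⟨hwv2, hwv0⟩ : w ≠ v2 ∧ (w, v0) ∈ A := by simpa using hw
  have hwv1 : w ≠ v1 := by rintro rfl; exact hc4 hwv0
  have hwU : w ∉ U := by simp [U, hA.ne_of_mem hwv0, hwv1, hwv2]
  have hout_sdiff : (outNbrs A v0).erase v1 ⊆ outNbrs A v0 \ U := by
    intro y hy
    obtain ⟨hyv1, hv0y⟩ : y ≠ v1 ∧ (v0, y) ∈ A := by simpa using hy
    have hyv2 : y ≠ v2 := by rintro rfl; exact hc6 hv0y
    simp [U, hv0y, hyv1, hyv2, (hA.ne_of_mem hv0y).symm]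
  have := card_le_card hout_sdiff
  have := card_add_card_outNbrs_sdiff_le hA hW hArc (by simp [U]) hwU hwv0
  omega

/-- If `G ∈ Ω_{n,d}` (with `n ≥ 4`, `1 ≤ d ≤ n-1`) contains three
vertices `{v₀,v₁,v₂}` inducing a directed `3`-cycle, then there exists a useful
neighbour or a useful arc for this `3`-cycle. -/
theorem useful_neighbour_or_arc_exists (n d : ℕ) (hn : 4 ≤ n)
    (hd1 : 1 ≤ d) (hd2 : d ≤ n - 1)
    (A : Finset (Fin n × Fin n)) (hA : IsRegularDigraph n d A)
    (v0 v1 v2 : Fin n) (h01 : v0 ≠ v1) (h02 : v0 ≠ v2) (h12 : v1 ≠ v2)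
    (hc1 : (v0, v1) ∈ A) (hc2 : (v1, v2) ∈ A) (hc3 : (v2, v0) ∈ A)
    (hc4 : (v1, v0) ∉ A) (hc5 : (v2, v1) ∉ A) (hc6 : (v0, v2) ∉ A) :
    (∃ x, UsefulNeighbour A {v0, v1, v2} x) ∨
      (∃ x y, UsefulArc A {v0, v1, v2} x y) :=
  useful_neighbour_or_arc_exists_general n d hn hd1 A hA v0 v1 v2 h01 h02 h12 hc4 hc6
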